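/- Let E be a unital trace-preserving completely positive map and P a projection. If supp(E†∘E(P)) ⊆ range(P), then E†∘E(P) = P. -/

import Mathlib

/-!
Let `Q = E†(E P)`. Since `E` and `E†` are completely positive and `E†(1) = 1` (dual to trace
preservation), unitality gives `1 - Q = E†(E(1 - P)) ≥ 0`, i.e. `Q ≤ 1`. The support condition
says `P Q = Q = Q P`, so `P - Q = P (1 - Q) P ≥ 0`; and `tr Q = tr P` by trace preservation.
A positive semidefinite matrix of trace zero vanishes, hence `Q = P`.
-/

open Finset Matrix ComplexOrder

/-- Complete positivity via the existence of a Kraus representation. -/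
def IsCP {I J : Type*} [Fintype I] [Fintype J]
    (E : Matrix I I ℂ →ₗ[ℂ] Matrix J J ℂ) : Prop :=
  ∃ (r : ℕ) (K : Fin r → Matrix J I ℂ), ∀ X, E X = ∑ a, K a * X * (K a)ᴴ

namespace Matrix

variable {m : Type*} [Fintype m]

lemma posSemidef_sum_mul_mul_conjTranspose {n ι : Type*} [Finite n] [Fintype ι]
    (K : ι → Matrix n m ℂ) {X : Matrix m m ℂ} (hX : X.PosSemidef) :
    (∑ a, K a * X * (K a)ᴴ).PosSemidef :=
  posSemidef_sum _ fun a _ => hX.mul_mul_conjTranspose_same (K a)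

lemma _root_.IsStarProjection.posSemidef {P : Matrix m m ℂ} (hP : IsStarProjection P) :
    P.PosSemidef := by
  have hPh : Pᴴ = P := hP.isSelfAdjoint.star_eq
  simpa only [hPh, hP.isIdempotentElem.eq] using posSemidef_conjTranspose_mul_self P

lemma mul_eq_right_of_range_mulVecLin_le {R : Type*} [CommRing R] [DecidableEq m]
    {P Q : Matrix m m R} (hP : IsIdempotentElem P)
    (h : LinearMap.range Q.mulVecLin ≤ LinearMap.range P.mulVecLin) : P * Q = Q := by
  refine toLin'.injective (LinearMap.ext fun v => ?_)
  obtain ⟨u, hu⟩ := h ⟨v, rfl⟩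
  simp only [mulVecLin_apply] at hu
  rw [toLin'_mul, LinearMap.comp_apply, toLin'_apply, toLin'_apply, ← hu, mulVec_mulVec, hP.eq]

lemma sub_posSemidef_of_mul_eq_right [DecidableEq m] {P Q : Matrix m m ℂ}
    (hP : IsStarProjection P) (hQ : Q.IsHermitian) (hPQ : P * Q = Q)
    (hQ_le_one : (1 - Q).PosSemidef) : (P - Q).PosSemidef := by
  have hPh : Pᴴ = P := hP.isSelfAdjoint.star_eq
  have hQP : Q * P = Q := by
    simpa only [conjTranspose_mul, hPh, hQ.eq] using congrArg conjTranspose hPQ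
  have hconj : P * (1 - Q) * Pᴴ = P - Q := by
    rw [hPh, Matrix.mul_sub, Matrix.mul_one, hPQ, Matrix.sub_mul, hP.isIdempotentElem.eq, hQP]
  simpa only [hconj] using hQ_le_one.mul_mul_conjTranspose_same P

end Matrix

section Channels

variable {I J : Type*} [Fintype I] [Fintype J]

lemma IsCP.posSemidef_map {E : Matrix I I ℂ →ₗ[ℂ] Matrix J J ℂ} (hE : IsCP E)
    {X : Matrix I I ℂ} (hX : X.PosSemidef) : (E X).PosSemidef := by
  obtain ⟨r, K, hK⟩ := hE
  simpa only [hK] using posSemidef_sum_mul_mul_conjTranspose K hX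

lemma IsCP.of_trace_adjoint {E : Matrix I I ℂ →ₗ[ℂ] Matrix J J ℂ}
    {Edag : Matrix J J ℂ →ₗ[ℂ] Matrix I I ℂ} (hE : IsCP E)
    (hadj : ∀ σ τ, (Edag σ * τ).trace = (σ * E τ).trace) : IsCP Edag := by
  obtain ⟨r, K, hK⟩ := hE
  refine ⟨r, fun a => (K a)ᴴ, fun σ => ext_iff_trace_mul_right.mpr fun τ => ?_⟩
  simp only [conjTranspose_conjTranspose, hadj, hK, Finset.mul_sum, Finset.sum_mul, trace_sum]
  refine Finset.sum_congr rfl fun a _ => ?_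
  rw [trace_mul_comm, Matrix.mul_assoc (K a * τ), trace_mul_comm, ← Matrix.mul_assoc]

lemma map_one_of_trace_adjoint [DecidableEq I] [DecidableEq J]
    {E : Matrix I I ℂ →ₗ[ℂ] Matrix J J ℂ} {Edag : Matrix J J ℂ →ₗ[ℂ] Matrix I I ℂ}
    (hTP : ∀ X, (E X).trace = X.trace)
    (hadj : ∀ σ τ, (Edag σ * τ).trace = (σ * E τ).trace) : Edag 1 = 1 :=
  ext_iff_trace_mul_right.mpr fun τ => by rw [hadj, Matrix.one_mul, Matrix.one_mul, hTP]

end Channels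

theorem adjoint_comp_fixes_of_support {n : ℕ}
    (E Edag : Matrix (Fin n) (Fin n) ℂ →ₗ[ℂ] Matrix (Fin n) (Fin n) ℂ)
    (hCP : IsCP E)
    (hTP : ∀ X, (E X).trace = X.trace)
    (hU : E 1 = 1)
    (hadj : ∀ σ τ : Matrix (Fin n) (Fin n) ℂ, (Edag σ * τ).trace = (σ * E τ).trace)
    (P : Matrix (Fin n) (Fin n) ℂ)
    (hPh : P.IsHermitian) (hPP : P * P = P)
    (hsupp : LinearMap.range (Edag (E P)).mulVecLin ≤ LinearMap.range P.mulVecLin) :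
    Edag (E P) = P := by
  have hP : IsStarProjection P := ⟨hPP, hPh⟩
  have hCPdag := hCP.of_trace_adjoint hadj
  set Q := Edag (E P)
  have hQ : Q.IsHermitian := (hCPdag.posSemidef_map (hCP.posSemidef_map hP.posSemidef)).isHermitian
  have hQ_le_one : (1 - Q).PosSemidef := by
    have h : 1 - Q = Edag (E (1 - P)) := by
      rw [map_sub, map_sub, hU, map_one_of_trace_adjoint hTP hadj]
    exact h ▸ hCPdag.posSemidef_map (hCP.posSemidef_map hP.one_sub.posSemidef)
  have hPQ : P * Q = Q := mul_eq_right_of_range_mulVecLin_le hP.isIdempotentElem hsupp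
  have htr : Q.trace = P.trace := by
    simpa only [Matrix.mul_one, hU, hTP] using hadj (E P) 1
  have hdiff := sub_posSemidef_of_mul_eq_right hP hQ hPQ hQ_le_one
  exact (sub_eq_zero.mp (hdiff.trace_eq_zero_iff.mp (by rw [trace_sub, htr, sub_self]))).symm
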